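/- arXiv:2207.09148 — 7 statements merged into one kernel-verified Lean document; each statement's English description precedes it below -/
import Mathlib

section
/- Let L be a complete atomistic ortholattice and X = At(L) its set of atoms with a ⊥ b iff a ≤ b^⊥. Then (X,⊥) is a point-closed orthoset, and the map L → C(X,⊥), p ↦ {x ∈ X : x ≤ p}, is an isomorphism of ortholattices. -/
/-- The set of elements orthogonal to every element of `A`. -/
def perpSet {X : Type*} (perp : X → X → Prop) (A : Set X) : Set X :=
  {x | ∀ a ∈ A, perp x a}

/-- A subset is orthoclosed if it equals its double orthocomplement. -/
def Orthoclosed {X : Type*} (perp : X → X → Prop) (A : Set X) : Prop :=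
  perpSet perp (perpSet perp A) = A

/-- `φ` (restricted to `∁(A^⊥)`) is a Sasaki map to the orthoclosed set `A`. -/
def IsSasakiMap {X : Type*} (perp : X → X → Prop) (A : Set X) (φ : X → X) : Prop :=
  (∀ e ∈ (perpSet perp A)ᶜ, φ e ∈ A) ∧
  (∀ e ∈ A, φ e = e) ∧
  (∀ e ∈ (perpSet perp A)ᶜ, ∀ f ∈ (perpSet perp A)ᶜ, (perp (φ e) f ↔ perp e (φ f)))

/-- A Sasaki space: every orthoclosed subset admits a Sasaki map. -/
def IsSasakiSpace {X : Type*} (perp : X → X → Prop) : Prop :=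
  ∀ A : Set X, Orthoclosed perp A → ∃ φ : X → X, IsSasakiMap perp A φ

/-
Orthogonality of atoms is `a ≤ b^⊥`, which is symmetric because `(-)^⊥` is an antitone involution
and irreflexive because `a ∧ a^⊥ = 0`. By atomisticity `p ≤ q` iff every atom below `p` lies below
`q`, so `p ↦ {atoms ≤ p}` is an order embedding; and `x ≤ p^⊥` iff `p ≤ x^⊥` iff every atom below
`p` is below `x^⊥`, so it carries `p^⊥` to the orthogonal complement. Hence its image is closed
under `(-)^⊥⊥`, and conversely every orthoclosed `A` is the image of `(⋀_{a ∈ A} a^⊥)^⊥`.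
-/

theorem le_comm_of_antitone_of_involutive {L : Type*} [Preorder L] {oc : L → L}
    (horder : Antitone oc) (hinv : Function.Involutive oc) {x y : L} :
    x ≤ oc y ↔ y ≤ oc x :=
  ⟨fun h => hinv y ▸ horder h, fun h => hinv x ▸ horder h⟩

section Atoms

variable {L : Type*} [PartialOrder L] [OrderBot L]

def atomPerp (oc : L → L) (a b : {a : L // IsAtom a}) : Prop :=
  a.1 ≤ oc b.1

def atomsBelow (p : L) : Set {a : L // IsAtom a} :=
  {a | a.1 ≤ p}

theorem atomPerp_symm {oc : L → L} (horder : Antitone oc) (hinv : Function.Involutive oc)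
    {a b : {a : L // IsAtom a}} (h : atomPerp oc a b) : atomPerp oc b a :=
  (le_comm_of_antitone_of_involutive horder hinv).1 h

theorem not_atomPerp_self {L : Type*} [SemilatticeInf L] [OrderBot L] {oc : L → L}
    (hbot : ∀ x : L, x ⊓ oc x = ⊥) (a : {a : L // IsAtom a}) : ¬ atomPerp oc a a := fun h =>
  a.2.1 (le_bot_iff.1 (hbot a.1 ▸ le_inf le_rfl h))

theorem atomsBelow_coe (a : {a : L // IsAtom a}) : atomsBelow a.1 = {a} := by
  ext b
  exact (a.2.le_iff_eq b.2.1).trans Subtype.ext_iff.symm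

theorem atomsBelow_subset_atomsBelow_iff [IsAtomistic L] {p q : L} :
    atomsBelow p ⊆ atomsBelow q ↔ p ≤ q :=
  ⟨fun h => le_iff_atom_le_imp.2 fun c hc hcp => h (a := ⟨c, hc⟩) hcp,
    fun hpq _ ha => le_trans ha hpq⟩

theorem atomsBelow_injective [IsAtomistic L] : Function.Injective (atomsBelow (L := L)) :=
  fun _ _ h => le_antisymm (atomsBelow_subset_atomsBelow_iff.1 h.le)
    (atomsBelow_subset_atomsBelow_iff.1 h.ge)

theorem perpSet_atomsBelow [IsAtomistic L] {oc : L → L} (horder : Antitone oc)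
    (hinv : Function.Involutive oc) (p : L) :
    perpSet (atomPerp oc) (atomsBelow p) = atomsBelow (oc p) := by
  ext x
  calc (∀ a ∈ atomsBelow p, x.1 ≤ oc a.1)
      ↔ ∀ c : L, IsAtom c → c ≤ p → c ≤ oc x.1 := by
        simp only [le_comm_of_antitone_of_involutive horder hinv (x := x.1), Subtype.forall]
        rfl
    _ ↔ p ≤ oc x.1 := le_iff_atom_le_imp.symm
    _ ↔ x.1 ≤ oc p := le_comm_of_antitone_of_involutive horder hinv

theorem orthoclosed_atomsBelow [IsAtomistic L] {oc : L → L} (horder : Antitone oc)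
    (hinv : Function.Involutive oc) (p : L) : Orthoclosed (atomPerp oc) (atomsBelow p) := by
  rw [Orthoclosed, perpSet_atomsBelow horder hinv, perpSet_atomsBelow horder hinv, hinv]

end Atoms

section CompleteLattice

variable {L : Type*} [CompleteLattice L]

theorem perpSet_eq_atomsBelow_iInf (oc : L → L) (A : Set {a : L // IsAtom a}) :
    perpSet (atomPerp oc) A = atomsBelow (⨅ a ∈ A, oc a.1) := by
  ext x
  exact le_iInf₂_iff.symm

theorem exists_atomsBelow_eq_of_orthoclosed [IsAtomistic L] {oc : L → L} (horder : Antitone oc)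
    (hinv : Function.Involutive oc) {A : Set {a : L // IsAtom a}}
    (hA : Orthoclosed (atomPerp oc) A) : ∃ p : L, atomsBelow p = A :=
  ⟨oc (⨅ a ∈ A, oc a.1), by
    rw [← perpSet_atomsBelow horder hinv, ← perpSet_eq_atomsBelow_iInf]
    exact hA⟩

end CompleteLattice

/-- for a complete atomistic ortholattice `L`, the set of atoms
with `a ⊥ b` iff `a ≤ b^⊥` is a point-closed orthoset, and
`p ↦ {atoms ≤ p}` is an isomorphism of ortholattices onto `C(X,⊥)`. -/
theorem atoms_of_complete_atomistic_ortholattice {L : Type*} [CompleteLattice L]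
    (oc : L → L)
    (horder : ∀ x y : L, x ≤ y → oc y ≤ oc x)
    (hinv : ∀ x : L, oc (oc x) = x)
    (hbot : ∀ x : L, x ⊓ oc x = ⊥)
    (hatomistic : ∀ x : L, x = sSup {a : L | IsAtom a ∧ a ≤ x}) :
    letI X := {a : L // IsAtom a}
    letI perp : X → X → Prop := fun a b => a.1 ≤ oc b.1
    letI ψ : L → Set X := fun p => {a : X | a.1 ≤ p}
    -- `(X,⊥)` is a point-closed orthoset
    (∀ a b : X, perp a b → perp b a) ∧
    (∀ a : X, ¬ perp a a) ∧
    (∀ a : X, Orthoclosed perp {a}) ∧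
    -- `ψ` is an isomorphism of ortholattices onto `C(X,⊥)`
    Function.Injective ψ ∧
    (∀ p : L, Orthoclosed perp (ψ p)) ∧
    (∀ A : Set X, Orthoclosed perp A → ∃ p : L, ψ p = A) ∧
    (∀ p q : L, p ≤ q ↔ ψ p ⊆ ψ q) ∧
    (∀ p : L, ψ (oc p) = perpSet perp (ψ p)) := by
  have : IsAtomistic L :=
    CompleteLattice.isAtomistic_iff.2 fun x => ⟨_, hatomistic x, fun _ ha => ha.1⟩
  exact ⟨fun _ _ => atomPerp_symm horder hinv,
    not_atomPerp_self hbot,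
    fun a => atomsBelow_coe a ▸ orthoclosed_atomsBelow horder hinv a.1,
    atomsBelow_injective,
    orthoclosed_atomsBelow horder hinv,
    fun _ => exists_atomsBelow_eq_of_orthoclosed horder hinv,
    fun _ _ => atomsBelow_subset_atomsBelow_iff.symm,
    fun p => (perpSet_atomsBelow horder hinv p).symm⟩
end

section
/- Let H be an orthomodular space. Then the orthoset (P(H),⊥) is a Sasaki space: for every closed subspace S of H, the map ⟨x⟩ ↦ ⟨P_S(x)⟩ (where P_S is the orthogonal projection onto S), defined for ⟨x⟩ not orthogonal to S, is a Sasaki map to P(S). -/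
/-- Vector-level orthocomplement of a subset of a Hermitian space. -/
def vperp {K H : Type*} (B : H → H → K) [Zero K] (S : Set H) : Set H :=
  {x | ∀ y ∈ S, B x y = 0}

/-!
Orthomodularity provides, for every closed subspace `M = S^⊥`, a map `P` with `P x ∈ M` and
`x - P x ∈ M^⊥` (no linearity is needed). Left additivity gives `B x (P y) = B (P x) (P y)`, so by
symmetry of orthogonality `P x ⊥ y ↔ x ⊥ P y`, which is (S2) on the induced map `⟨x⟩ ↦ ⟨P x⟩`;
anisotropy makes `P` the identity on `M`, which is (S1). Finally every orthoclosed `A ⊆ P(H)` is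
`P(S^⊥)` for `S` the set of representatives of `A^⊥`.
-/

open scoped LinearAlgebra.Projectivization

open Projectivization

section Orthogonality

variable {K H : Type*} [AddGroup K] [AddCommGroup H] {B : H → H → K}

def IsOrthogonalProjection (B : H → H → K) (M : Set H) (P : H → H) : Prop :=
  ∀ x, P x ∈ M ∧ x - P x ∈ vperp B M

theorem sub_left_of_add_left (haddl : ∀ x y z : H, B (x + y) z = B x z + B y z) (x y z : H) :
    B (x - y) z = B x z - B y z :=
  (AddMonoidHom.mk' (B · z) fun x y => haddl x y z).map_sub x y

theorem sub_mem_vperp (haddl : ∀ x y z : H, B (x + y) z = B x z + B y z) {S : Set H} {x y : H}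
    (hx : x ∈ vperp B S) (hy : y ∈ vperp B S) : x - y ∈ vperp B S := fun z hz => by
  rw [sub_left_of_add_left haddl, hx z hz, hy z hz, sub_zero]

theorem exists_isOrthogonalProjection {S : Set H}
    (hOM : ∀ x : H, ∃ m ∈ vperp B S, ∃ n ∈ vperp B (vperp B S), x = m + n) :
    ∃ P : H → H, IsOrthogonalProjection B (vperp B S) P := by
  choose m hm n hn hx using hOM
  exact ⟨m, fun x => ⟨hm x, sub_eq_of_eq_add' (hx x) ▸ hn x⟩⟩

namespace IsOrthogonalProjection

variable {M : Set H} {P : H → H}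

theorem form_apply_right_eq (hP : IsOrthogonalProjection B M P)
    (haddl : ∀ x y z : H, B (x + y) z = B x z + B y z) (x y : H) :
    B x (P y) = B (P x) (P y) := by
  rw [← sub_eq_zero, ← sub_left_of_add_left haddl]
  exact (hP x).2 _ (hP y).1

theorem orth_apply_iff (hP : IsOrthogonalProjection B M P)
    (haddl : ∀ x y z : H, B (x + y) z = B x z + B y z)
    (hB : ∀ x y : H, B x y = 0 → B y x = 0) (x y : H) :
    B (P x) y = 0 ↔ B x (P y) = 0 :=
  calc B (P x) y = 0 ↔ B y (P x) = 0 := ⟨hB _ _, hB _ _⟩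
    _ ↔ B (P y) (P x) = 0 := by rw [hP.form_apply_right_eq haddl y x]
    _ ↔ B (P x) (P y) = 0 := ⟨hB _ _, hB _ _⟩
    _ ↔ B x (P y) = 0 := by rw [hP.form_apply_right_eq haddl x y]

theorem mem_vperp_of_apply_eq_zero (hP : IsOrthogonalProjection B M P) {x : H} (hx : P x = 0) :
    x ∈ vperp B M := by
  simpa [hx] using (hP x).2

theorem apply_eq_self {S : Set H} (hP : IsOrthogonalProjection B (vperp B S) P)
    (haddl : ∀ x y z : H, B (x + y) z = B x z + B y z) (haniso : ∀ x : H, B x x = 0 → x = 0)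
    {x : H} (hx : x ∈ vperp B S) : P x = x := by
  have hxM : x - P x ∈ vperp B S := sub_mem_vperp haddl hx (hP x).1
  exact (sub_eq_zero.mp (haniso _ ((hP x).2 _ hxM))).symm

end IsOrthogonalProjection

end Orthogonality

section Projective

variable {K H : Type*} [DivisionRing K] [AddCommGroup H] [Module K H] {B : H → H → K}

def projOrth (B : H → H → K) (u v : ℙ K H) : Prop :=
  B u.rep v.rep = 0

theorem perpSet_projOrth (T : Set (ℙ K H)) :
    perpSet (projOrth B) T = {u | u.rep ∈ vperp B (Projectivization.rep '' T)} := by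
  ext u
  simp [perpSet, vperp, projOrth]

theorem Orthoclosed.exists_eq_setOf_rep_mem_vperp {A : Set (ℙ K H)}
    (hA : Orthoclosed (projOrth B) A) : ∃ S : Set H, A = {u | u.rep ∈ vperp B S} :=
  ⟨_, hA.symm.trans (perpSet_projOrth _)⟩

theorem smul_mem_vperp (hsmull : ∀ (c : K) (x y : H), B (c • x) y = c * B x y) {S : Set H}
    (c : K) {x : H} (hx : x ∈ vperp B S) : c • x ∈ vperp B S := fun z hz => by
  rw [hsmull, hx z hz, mul_zero]

theorem rep_mk_mem_vperp (hsmull : ∀ (c : K) (x y : H), B (c • x) y = c * B x y) {S : Set H}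
    {x : H} (hx0 : x ≠ 0) (hx : x ∈ vperp B S) : (mk K x hx0).rep ∈ vperp B S := by
  obtain ⟨a, ha⟩ := exists_smul_eq_mk_rep K x hx0
  exact ha ▸ smul_mem_vperp hsmull a hx

theorem rep_mk_orth_iff (hsmull : ∀ (c : K) (x y : H), B (c • x) y = c * B x y)
    {x : H} (hx0 : x ≠ 0) (y : H) : B (mk K x hx0).rep y = 0 ↔ B x y = 0 := by
  obtain ⟨a, ha⟩ := exists_smul_eq_mk_rep K x hx0
  rw [← ha, Units.smul_def, hsmull, a.mul_right_eq_zero]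

theorem orth_rep_mk_iff (hsmull : ∀ (c : K) (x y : H), B (c • x) y = c * B x y)
    (hB : ∀ x y : H, B x y = 0 → B y x = 0) {x : H} (hx0 : x ≠ 0) (y : H) :
    B y (mk K x hx0).rep = 0 ↔ B y x = 0 :=
  calc B y (mk K x hx0).rep = 0 ↔ B (mk K x hx0).rep y = 0 := ⟨hB _ _, hB _ _⟩
    _ ↔ B x y = 0 := rep_mk_orth_iff hsmull hx0 y
    _ ↔ B y x = 0 := ⟨hB _ _, hB _ _⟩

end Projective

section Sasaki

variable {K H : Type*} [DivisionRing K] [AddCommGroup H] [Module K H] {B : H → H → K}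

open Classical in
variable (K) in
noncomputable def projMap (P : H → H) (u : ℙ K H) : ℙ K H :=
  if h : P u.rep = 0 then u else mk K (P u.rep) h

theorem notMem_perpSet_projOrth_of_mem (haniso : ∀ x : H, B x x = 0 → x = 0)
    {A : Set (ℙ K H)} {u : ℙ K H} (hu : u ∈ A) : u ∉ perpSet (projOrth B) A :=
  fun h => u.rep_nonzero (haniso _ (h u hu))

theorem projMap_of_notMem_perpSet {S : Set H} {P : H → H}
    (hP : IsOrthogonalProjection B (vperp B S) P) {u : ℙ K H}
    (hu : u ∉ perpSet (projOrth B) {u : ℙ K H | u.rep ∈ vperp B S}) :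
    ∃ h : P u.rep ≠ 0, projMap K P u = mk K (P u.rep) h := by
  have h : P u.rep ≠ 0 := fun h => hu fun a ha => hP.mem_vperp_of_apply_eq_zero h a.rep ha
  exact ⟨h, by rw [projMap, dif_neg h]⟩

theorem isSasakiMap_of_isOrthogonalProjection
    (haddl : ∀ x y z : H, B (x + y) z = B x z + B y z)
    (hsmull : ∀ (c : K) (x y : H), B (c • x) y = c * B x y)
    (hB : ∀ x y : H, B x y = 0 → B y x = 0) (haniso : ∀ x : H, B x x = 0 → x = 0)
    {S : Set H} {P : H → H} (hP : IsOrthogonalProjection B (vperp B S) P)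
    {φ : ℙ K H → ℙ K H}
    (hφ : ∀ u ∈ (perpSet (projOrth B) {u : ℙ K H | u.rep ∈ vperp B S})ᶜ,
      ∃ h : P u.rep ≠ 0, φ u = mk K (P u.rep) h) :
    IsSasakiMap (projOrth B) {u : ℙ K H | u.rep ∈ vperp B S} φ := by
  refine ⟨fun e he => ?_, fun e he => ?_, fun e he f hf => ?_⟩
  · obtain ⟨h, hφe⟩ := hφ e he
    rw [hφe]
    exact rep_mk_mem_vperp hsmull h (hP _).1
  · obtain ⟨h, hφe⟩ := hφ e (notMem_perpSet_projOrth_of_mem haniso he)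
    simp only [hφe, hP.apply_eq_self haddl haniso he, mk_rep]
  · obtain ⟨h, hφe⟩ := hφ e he
    obtain ⟨h', hφf⟩ := hφ f hf
    simp only [projOrth, hφe, hφf, rep_mk_orth_iff hsmull, orth_rep_mk_iff hsmull hB]
    exact hP.orth_apply_iff haddl hB _ _

end Sasaki

theorem orthomodular_space_is_sasaki_space_general {K : Type*} [DivisionRing K]
    [StarRing K] {H : Type*} [AddCommGroup H] [Module K H]
    (B : H → H → K)
    (haddl : ∀ x y z : H, B (x + y) z = B x z + B y z)
    (hsmull : ∀ (c : K) (x y : H), B (c • x) y = c * B x y)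
    (hsymm : ∀ x y : H, B x y = star (B y x))
    (haniso : ∀ x : H, B x x = 0 → x = 0)
    -- orthomodularity: `M + M^⊥ = H` for every closed subspace `M = S^⊥`
    (hOM : ∀ S : Set H, ∀ x : H,
      ∃ m ∈ vperp B S, ∃ n ∈ vperp B (vperp B S), x = m + n) :
    letI perp : Projectivization K H → Projectivization K H → Prop :=
      fun u v => B u.rep v.rep = 0
    IsSasakiSpace perp ∧
    -- the Sasaki maps are induced by the orthogonal projections:
    (∀ S : Set H, ∀ P : H → H,
      (∀ x : H, P x ∈ vperp B S ∧ x - P x ∈ vperp B (vperp B S)) →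
      ∀ φ : Projectivization K H → Projectivization K H,
        (∀ u ∈ (perpSet perp {u : Projectivization K H | u.rep ∈ vperp B S})ᶜ,
          ∃ h : P u.rep ≠ 0, φ u = Projectivization.mk K (P u.rep) h) →
        IsSasakiMap perp {u : Projectivization K H | u.rep ∈ vperp B S} φ) := by
  have hB : ∀ x y : H, B x y = 0 → B y x = 0 := fun x y h => by rw [hsymm, h, star_zero]
  refine ⟨fun A hA => ?_, fun S P hP φ hφ =>
    isSasakiMap_of_isOrthogonalProjection haddl hsmull hB haniso hP hφ⟩
  obtain ⟨S, rfl⟩ := Orthoclosed.exists_eq_setOf_rep_mem_vperp hA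
  obtain ⟨P, hP⟩ := exists_isOrthogonalProjection (hOM S)
  exact ⟨projMap K P, isSasakiMap_of_isOrthogonalProjection haddl hsmull hB haniso hP
    fun u hu => projMap_of_notMem_perpSet hP hu⟩

/-- for an orthomodular space `H`, the orthoset `(P(H),⊥)` is a
Sasaki space; moreover, for every closed subspace `M` of `H`, the map induced
on `P(H)` by an orthogonal projection `P` onto `M` is a Sasaki map to `P(M)`. -/
theorem orthomodular_space_is_sasaki_space {K : Type*} [DivisionRing K]
    [StarRing K] {H : Type*} [AddCommGroup H] [Module K H]
    (B : H → H → K)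
    (haddl : ∀ x y z : H, B (x + y) z = B x z + B y z)
    (haddr : ∀ x y z : H, B x (y + z) = B x y + B x z)
    (hsmull : ∀ (c : K) (x y : H), B (c • x) y = c * B x y)
    (hsymm : ∀ x y : H, B x y = star (B y x))
    (haniso : ∀ x : H, B x x = 0 → x = 0)
    -- orthomodularity: `M + M^⊥ = H` for every closed subspace `M = S^⊥`
    (hOM : ∀ S : Set H, ∀ x : H,
      ∃ m ∈ vperp B S, ∃ n ∈ vperp B (vperp B S), x = m + n) :
    letI perp : Projectivization K H → Projectivization K H → Prop :=
      fun u v => B u.rep v.rep = 0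
    IsSasakiSpace perp ∧
    -- the Sasaki maps are induced by the orthogonal projections:
    (∀ S : Set H, ∀ P : H → H,
      (∀ x : H, P x ∈ vperp B S ∧ x - P x ∈ vperp B (vperp B S)) →
      ∀ φ : Projectivization K H → Projectivization K H,
        (∀ u ∈ (perpSet perp {u : Projectivization K H | u.rep ∈ vperp B S})ᶜ,
          ∃ h : P u.rep ≠ 0, φ u = Projectivization.mk K (P u.rep) h) →
        IsSasakiMap perp {u : Projectivization K H | u.rep ∈ vperp B S} φ) :=
  orthomodular_space_is_sasaki_space_general B haddl hsmull hsymm haniso hOM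
end

section
/- Let L be an orthomodular lattice and x ∈ L. Then the Sasaki projection π_x is self-adjoint with respect to orthogonality: for all y, z ∈ L, π_x(y) ≤ z^⊥ if and only if y ≤ π_x(z)^⊥. -/
section
variable {L : Type*} [Lattice L] [BoundedOrder L]

/-- The defining properties of an orthocomplementation `oc` together with the
orthomodular law: `L` is an orthomodular lattice. -/
def IsOrthomodular (oc : L → L) : Prop :=
  (∀ x y : L, x ≤ y → oc y ≤ oc x) ∧
  (∀ x : L, oc (oc x) = x) ∧
  (∀ x : L, x ⊓ oc x = ⊥) ∧
  (∀ x y : L, x ≤ y → y = x ⊔ (y ⊓ oc x))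

/-- The Sasaki projection to `x`. -/
def sasakiProj (oc : L → L) (x y : L) : L := x ⊓ (oc x ⊔ y)

end

/-!
De Morgan's laws give `(π_x z)ᗮ = xᗮ ⊔ (x ⊓ zᗮ)`, and the orthomodular law applied to
`xᗮ ≤ xᗮ ⊔ y` gives `y ≤ xᗮ ⊔ π_x y`. Hence `π_x y ≤ zᗮ`, i.e. `π_x y ≤ x ⊓ zᗮ`, forces
`y ≤ (π_x z)ᗮ`; the converse follows by exchanging `y` and `z`, as orthogonality is symmetric.
-/

section
variable {L : Type*} [Lattice L] {oc : L → L}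

theorem le_oc_comm (hanti : Antitone oc) (hinv : Function.Involutive oc) {a b : L} :
    a ≤ oc b ↔ b ≤ oc a :=
  ⟨fun h => (hinv b).ge.trans (hanti h), fun h => (hinv a).ge.trans (hanti h)⟩

theorem oc_le_comm (hanti : Antitone oc) (hinv : Function.Involutive oc) {a b : L} :
    oc a ≤ b ↔ oc b ≤ a :=
  ⟨fun h => (hanti h).trans (hinv a).le, fun h => (hanti h).trans (hinv b).le⟩

theorem oc_inf (hanti : Antitone oc) (hinv : Function.Involutive oc) (a b : L) :
    oc (a ⊓ b) = oc a ⊔ oc b :=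
  le_antisymm
    ((oc_le_comm hanti hinv).2 <| le_inf ((oc_le_comm hanti hinv).1 le_sup_left)
      ((oc_le_comm hanti hinv).1 le_sup_right))
    (sup_le (hanti inf_le_left) (hanti inf_le_right))

theorem oc_sup (hanti : Antitone oc) (hinv : Function.Involutive oc) (a b : L) :
    oc (a ⊔ b) = oc a ⊓ oc b := by
  rw [← hinv (oc a ⊓ oc b), oc_inf hanti hinv, hinv a, hinv b]

theorem oc_sasakiProj (hanti : Antitone oc) (hinv : Function.Involutive oc) (x z : L) :
    oc (sasakiProj oc x z) = oc x ⊔ (x ⊓ oc z) := by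
  rw [sasakiProj, oc_inf hanti hinv, oc_sup hanti hinv, hinv x]

theorem le_oc_sup_sasakiProj (hinv : Function.Involutive oc)
    (hom : ∀ a b : L, a ≤ b → b = a ⊔ (b ⊓ oc a)) (x y : L) :
    y ≤ oc x ⊔ sasakiProj oc x y :=
  calc y ≤ oc x ⊔ y := le_sup_right
    _ = oc x ⊔ ((oc x ⊔ y) ⊓ oc (oc x)) := hom _ _ le_sup_left
    _ = oc x ⊔ sasakiProj oc x y := by rw [hinv x, sasakiProj, inf_comm]

theorem le_oc_sasakiProj_of_sasakiProj_le_oc (hanti : Antitone oc)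
    (hinv : Function.Involutive oc) (hom : ∀ a b : L, a ≤ b → b = a ⊔ (b ⊓ oc a))
    {x y z : L} (h : sasakiProj oc x y ≤ oc z) : y ≤ oc (sasakiProj oc x z) :=
  calc y ≤ oc x ⊔ sasakiProj oc x y := le_oc_sup_sasakiProj hinv hom x y
    _ ≤ oc x ⊔ (x ⊓ oc z) := sup_le_sup_left (le_inf inf_le_left h) _
    _ = oc (sasakiProj oc x z) := (oc_sasakiProj hanti hinv x z).symm

end

/-- the Sasaki projection is self-adjoint w.r.t. orthogonality:
`π_x y ⊥ z` iff `y ⊥ π_x z`. -/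
theorem sasakiProj_selfAdjoint {L : Type*} [Lattice L] [BoundedOrder L]
    (oc : L → L) (h : IsOrthomodular oc) (x : L) :
    ∀ y z : L, sasakiProj oc x y ≤ oc z ↔ y ≤ oc (sasakiProj oc x z) := by
  obtain ⟨hanti, hinv, -, hom⟩ := h
  replace hanti : Antitone oc := fun a b hab => hanti a b hab
  intro y z
  refine ⟨le_oc_sasakiProj_of_sasakiProj_le_oc hanti hinv hom, fun hyz => ?_⟩
  rw [le_oc_comm hanti hinv] at hyz ⊢
  exact le_oc_sasakiProj_of_sasakiProj_le_oc hanti hinv hom hyz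
end

section
/- Let (X,⊥) be an orthoset, A an orthoclosed subset, and D a maximal ⊥-set (set of mutually orthogonal elements) contained in A. If there exists a Sasaki map to D^⊥, then A = D^⊥⊥. -/
/-!
If `x ∈ A` lies outside `D^⊥⊥`, its Sasaki image `φ x` lies in `D^⊥`. Every `z ∈ A^⊥` is a fixed
point of `φ` (as `A^⊥ ⊆ D^⊥`), so adjointness gives `φ x ⊥ z` from `x ⊥ z`; hence
`φ x ∈ A^⊥⊥ = A`. Maximality of `D` then puts `φ x` into `D ∩ D^⊥`, which is empty.
-/

section Orthoset

variable {X : Type*} {perp : X → X → Prop}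

theorem perpSet_anti {A B : Set X} (h : A ⊆ B) : perpSet perp B ⊆ perpSet perp A :=
  fun _ hx a ha => hx a (h ha)

theorem notMem_perpSet_of_mem (hirrefl : ∀ x, ¬ perp x x) {A : Set X} {a : X} (ha : a ∈ A) :
    a ∉ perpSet perp A :=
  fun h => hirrefl a (h a ha)

theorem perpSet_perpSet_subset_of_subset {A D : Set X} (hA : Orthoclosed perp A) (hDA : D ⊆ A) :
    perpSet perp (perpSet perp D) ⊆ A :=
  hA ▸ perpSet_anti (perpSet_anti hDA)

theorem IsSasakiMap.perp_iff_of_mem (hirrefl : ∀ x, ¬ perp x x) {B : Set X} {φ : X → X}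
    (hφ : IsSasakiMap perp B φ) {e f : X} (he : e ∉ perpSet perp B) (hf : f ∈ B) :
    perp (φ e) f ↔ perp e f := by
  simpa only [hφ.2.1 f hf] using hφ.2.2 e he f (notMem_perpSet_of_mem hirrefl hf)

theorem IsSasakiMap.apply_mem_perpSet_perpSet (hsymm : ∀ x y, perp x y → perp y x)
    (hirrefl : ∀ x, ¬ perp x x) {A B : Set X} {φ : X → X} (hφ : IsSasakiMap perp B φ)
    (hAB : perpSet perp A ⊆ B) {x : X} (hx : x ∈ A) (hxB : x ∉ perpSet perp B) :
    φ x ∈ perpSet perp (perpSet perp A) :=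
  fun _ hz => (hφ.perp_iff_of_mem hirrefl hxB (hAB hz)).2 (hsymm _ _ (hz x hx))

end Orthoset

theorem eq_double_perp_of_maximal_perpSet_general {X : Type*} (perp : X → X → Prop)
    (hsymm : ∀ x y, perp x y → perp y x) (hirrefl : ∀ x, ¬ perp x x)
    (A D : Set X) (hA : Orthoclosed perp A) (hDA : D ⊆ A)
    (hmax : ∀ x ∈ A, (∀ d ∈ D, perp x d) → x ∈ D)
    (hφ : ∃ φ : X → X, IsSasakiMap perp (perpSet perp D) φ) :
    A = perpSet perp (perpSet perp D) := by
  obtain ⟨φ, hφ⟩ := hφ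
  refine Set.Subset.antisymm (fun x hx => ?_) (perpSet_perpSet_subset_of_subset hA hDA)
  by_contra hxD
  have hφxD : φ x ∈ perpSet perp D := hφ.1 x hxD
  have hφxA : φ x ∈ A :=
    hA ▸ hφ.apply_mem_perpSet_perpSet hsymm hirrefl (perpSet_anti hDA) hx hxD
  exact notMem_perpSet_of_mem hirrefl (hmax _ hφxA hφxD) hφxD

/-- if `D` is a maximal ⊥-set contained in an orthoclosed set `A`
and there is a Sasaki map to `D^⊥`, then `A = D^⊥⊥`. -/
theorem eq_double_perp_of_maximal_perpSet {X : Type*} (perp : X → X → Prop)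
    (hsymm : ∀ x y, perp x y → perp y x) (hirrefl : ∀ x, ¬ perp x x)
    (A D : Set X) (hA : Orthoclosed perp A) (hDA : D ⊆ A)
    (hD : ∀ d ∈ D, ∀ e ∈ D, d ≠ e → perp d e)
    (hmax : ∀ x ∈ A, (∀ d ∈ D, perp x d) → x ∈ D)
    (hφ : ∃ φ : X → X, IsSasakiMap perp (perpSet perp D) φ) :
    A = perpSet perp (perpSet perp D) :=
  eq_double_perp_of_maximal_perpSet_general perp hsymm hirrefl A D hA hDA hmax hφ
end

section
/- An orthomodular lattice L has the covering property if and only if every Sasaki projection π_x maps basic elements (atoms or 0) to basic elements. -/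
/-!
In an orthomodular lattice, `d ↦ x ⊔ d` and `c ↦ c ⊓ xᗮ` are mutually inverse order
isomorphisms between `[0, xᗮ]` and `[x, 1]`. Since `xᗮ ⊔ a = xᗮ ⊔ π_x(a)` with `π_x(a) ≤ x = xᗮᗮ`,
this gives `xᗮ ⋖ xᗮ ⊔ a ↔ IsAtom (π_x a)`, while `π_x a = 0` exactly when `a ≤ xᗮ`.
-/

namespace IsOrthomodular

variable {L : Type*} [Lattice L] [BoundedOrder L] {oc : L → L}

theorem oc_oc (h : IsOrthomodular oc) (x : L) : oc (oc x) = x := h.2.1 x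

theorem inf_oc_self (h : IsOrthomodular oc) (x : L) : x ⊓ oc x = ⊥ := h.2.2.1 x

theorem sup_inf_oc_of_le (h : IsOrthomodular oc) {x y : L} (hxy : x ≤ y) :
    x ⊔ (y ⊓ oc x) = y :=
  (h.2.2.2 x y hxy).symm

theorem oc_sup (h : IsOrthomodular oc) (u v : L) : oc (u ⊔ v) = oc u ⊓ oc v := by
  have hanti := h.1
  refine le_antisymm (le_inf (hanti _ _ le_sup_left) (hanti _ _ le_sup_right)) ?_
  have hu : u ≤ oc (oc u ⊓ oc v) := (h.oc_oc u).ge.trans (hanti _ _ inf_le_left)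
  have hv : v ≤ oc (oc u ⊓ oc v) := (h.oc_oc v).ge.trans (hanti _ _ inf_le_right)
  simpa only [h.oc_oc] using hanti _ _ (sup_le hu hv)

theorem sup_inf_oc_of_le_oc (h : IsOrthomodular oc) {x d : L} (hd : d ≤ oc x) :
    (x ⊔ d) ⊓ oc x = d := by
  have hdy : d ≤ (x ⊔ d) ⊓ oc x := le_inf le_sup_right hd
  have hrest : (x ⊔ d) ⊓ oc x ⊓ oc d = ⊥ := by
    refine le_bot_iff.1 ?_
    calc (x ⊔ d) ⊓ oc x ⊓ oc d ≤ (x ⊔ d) ⊓ oc (x ⊔ d) := by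
          rw [h.oc_sup, ← inf_assoc]
      _ = ⊥ := h.inf_oc_self _
  rw [← h.sup_inf_oc_of_le hdy, hrest, sup_bot_eq]

def iicOcOrderIsoIci (h : IsOrthomodular oc) (x : L) : Set.Iic (oc x) ≃o Set.Ici x where
  toFun d := ⟨x ⊔ d, le_sup_left⟩
  invFun c := ⟨c ⊓ oc x, inf_le_right⟩
  left_inv d := Subtype.ext (h.sup_inf_oc_of_le_oc d.2)
  right_inv c := Subtype.ext (h.sup_inf_oc_of_le c.2)
  map_rel_iff' {d d'} := by
    refine ⟨fun hle => ?_, fun hle => sup_le_sup_left (α := L) hle x⟩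
    rw [← Subtype.coe_le_coe, ← h.sup_inf_oc_of_le_oc d.2, ← h.sup_inf_oc_of_le_oc d'.2]
    exact inf_le_inf_right _ hle

theorem covBy_sup_iff_isAtom (h : IsOrthomodular oc) {x p : L} (hp : p ≤ oc x) :
    x ⋖ x ⊔ p ↔ IsAtom p :=
  calc x ⋖ x ⊔ p ↔ IsAtom (h.iicOcOrderIsoIci x ⟨p, hp⟩) :=
      (Set.Ici.isAtom_iff (b := h.iicOcOrderIsoIci x ⟨p, hp⟩)).symm
    _ ↔ IsAtom (⟨p, hp⟩ : Set.Iic (oc x)) := OrderIso.isAtom_iff _ _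
    _ ↔ IsAtom p := ⟨IsAtom.of_isAtom_coe_Iic, fun hatom => hatom.Iic hp⟩

theorem oc_sup_sasakiProj (h : IsOrthomodular oc) (x y : L) :
    oc x ⊔ sasakiProj oc x y = oc x ⊔ y := by
  have := h.sup_inf_oc_of_le (le_sup_left : oc x ≤ oc x ⊔ y)
  rwa [h.oc_oc, inf_comm] at this

theorem sasakiProj_eq_bot_iff (h : IsOrthomodular oc) {x y : L} :
    sasakiProj oc x y = ⊥ ↔ y ≤ oc x := by
  refine ⟨fun hbot => ?_, fun hy => ?_⟩
  · have := h.oc_sup_sasakiProj x y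
    rw [hbot, sup_bot_eq] at this
    exact this ▸ le_sup_right
  · rw [sasakiProj, sup_eq_left.2 hy, h.inf_oc_self]

theorem covBy_oc_sup_iff_isAtom_sasakiProj (h : IsOrthomodular oc) (x y : L) :
    oc x ⋖ oc x ⊔ y ↔ IsAtom (sasakiProj oc x y) := by
  rw [← h.oc_sup_sasakiProj]
  exact h.covBy_sup_iff_isAtom ((h.oc_oc x).symm ▸ inf_le_left)

end IsOrthomodular

/-- an orthomodular lattice has the covering property iff every
Sasaki projection maps basic elements (atoms or `⊥`) to basic elements. -/
theorem covering_iff_sasakiProj_basic {L : Type*} [Lattice L] [BoundedOrder L]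
    (oc : L → L) (h : IsOrthomodular oc) :
    (∀ (x a : L), IsAtom a → a ⊓ x = ⊥ → x ⋖ (x ⊔ a)) ↔
    (∀ (x a : L), (a = ⊥ ∨ IsAtom a) →
      (sasakiProj oc x a = ⊥ ∨ IsAtom (sasakiProj oc x a))) := by
  constructor
  · intro hcov x a ha
    by_cases hax : a ≤ oc x
    · exact Or.inl (h.sasakiProj_eq_bot_iff.2 hax)
    obtain rfl | ha := ha
    · exact absurd bot_le hax
    exact Or.inr ((h.covBy_oc_sup_iff_isAtom_sasakiProj x a).1
      (hcov _ a ha (ha.not_le_iff_disjoint.1 hax).eq_bot))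
  · intro hsas x a ha hax
    have hcov := h.covBy_oc_sup_iff_isAtom_sasakiProj (oc x) a
    rw [h.oc_oc] at hcov
    refine hcov.2 ((hsas (oc x) a (Or.inr ha)).resolve_left fun hbot => ?_)
    rw [h.sasakiProj_eq_bot_iff, h.oc_oc] at hbot
    exact ha.not_le_iff_disjoint.2 (disjoint_iff.2 hax) hbot
end

section
/- Let (X,⊥) be a point-closed Dacey space such that C(X,⊥) has the covering property. Then (X,⊥) is a Sasaki space. -/
section

variable {X : Type*} {perp : X → X → Prop}

local notation:max S "^⊥" => perpSet perp S

variable (perp) in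
def IsDaceySpace : Prop :=
  ∀ A B : Set X, Orthoclosed perp A → Orthoclosed perp B → A ⊆ B → B = (A ∪ (B ∩ A^⊥))^⊥^⊥

variable (perp) in
def HasCoveringProperty : Prop :=
  ∀ A : Set X, Orthoclosed perp A → ∀ x ∉ A,
    A ⊂ (A ∪ {x})^⊥^⊥ ∧
    ∀ B : Set X, Orthoclosed perp B → A ⊂ B → B ⊆ (A ∪ {x})^⊥^⊥ → B = (A ∪ {x})^⊥^⊥

theorem perpSet_anti_s16 {S T : Set X} (h : S ⊆ T) : T^⊥ ⊆ S^⊥ :=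
  fun _ hx a ha => hx a (h ha)

theorem subset_perpSet_perpSet (hsymm : ∀ x y, perp x y → perp y x) (S : Set X) :
    S ⊆ S^⊥^⊥ :=
  fun s hs _ hy => hsymm _ _ (hy s hs)

theorem orthoclosed_perpSet (hsymm : ∀ x y, perp x y → perp y x) (S : Set X) :
    Orthoclosed perp S^⊥ :=
  (perpSet_anti_s16 (subset_perpSet_perpSet hsymm S)).antisymm (subset_perpSet_perpSet hsymm _)

theorem perpSet_perpSet_subset {S T : Set X} (hT : Orthoclosed perp T) (h : S ⊆ T) :
    S^⊥^⊥ ⊆ T :=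
  hT ▸ perpSet_anti_s16 (perpSet_anti_s16 h)

theorem subset_perpSet_perpSet_union_left (hsymm : ∀ x y, perp x y → perp y x)
    (S T : Set X) : S ⊆ (S ∪ T)^⊥^⊥ :=
  Set.subset_union_left.trans (subset_perpSet_perpSet hsymm _)

theorem mem_perpSet_perpSet_union_singleton (hsymm : ∀ x y, perp x y → perp y x)
    (S : Set X) (e : X) : e ∈ (S ∪ {e})^⊥^⊥ :=
  subset_perpSet_perpSet hsymm _ (Or.inr rfl)

theorem IsDaceySpace.eq_perpSet_of_inter_eq_empty (hsymm : ∀ x y, perp x y → perp y x)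
    (hDacey : IsDaceySpace perp) {A B : Set X} (hA : Orthoclosed perp A)
    (hB : Orthoclosed perp B) (hAB : A^⊥ ⊆ B) (h : B ∩ A = ∅) : B = A^⊥ := by
  have := hDacey _ B (orthoclosed_perpSet hsymm A) hB hAB
  rwa [hA, h, Set.union_empty, orthoclosed_perpSet hsymm A] at this

theorem HasCoveringProperty.perpSet_perpSet_union_singleton_eq
    (hsymm : ∀ x y, perp x y → perp y x) (hcover : HasCoveringProperty perp) {C : Set X}
    (hC : Orthoclosed perp C) {e x : X} (he : e ∉ C) (hx : x ∉ C) (hxe : x ∈ (C ∪ {e})^⊥^⊥) :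
    (C ∪ {x})^⊥^⊥ = (C ∪ {e})^⊥^⊥ := by
  have hxC : x ∈ (C ∪ {x})^⊥^⊥ := mem_perpSet_perpSet_union_singleton hsymm C x
  refine (hcover C hC e he).2 _ (orthoclosed_perpSet hsymm _) ?_ ?_
  · exact subset_perpSet_perpSet_union_left hsymm _ _ |>.ssubset_of_ne
      (fun h => hx (h ▸ hxC))
  · exact perpSet_perpSet_subset (orthoclosed_perpSet hsymm _)
      (Set.union_subset (subset_perpSet_perpSet_union_left hsymm _ _)
        (Set.singleton_subset_iff.mpr hxe))

theorem exists_mem_perpSet_perpSet_union_singleton_eq (hsymm : ∀ x y, perp x y → perp y x)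
    (hirrefl : ∀ x, ¬ perp x x) (hDacey : IsDaceySpace perp) (hcover : HasCoveringProperty perp)
    {A : Set X} (hA : Orthoclosed perp A) {e : X} (he : e ∉ A^⊥) :
    ∃ x ∈ A, (A^⊥ ∪ {x})^⊥^⊥ = (A^⊥ ∪ {e})^⊥^⊥ := by
  obtain ⟨x, hxe, hxA⟩ : ((A^⊥ ∪ {e})^⊥^⊥ ∩ A).Nonempty := by
    refine Set.nonempty_iff_ne_empty.mpr fun h => he ?_
    rw [← hDacey.eq_perpSet_of_inter_eq_empty hsymm hA (orthoclosed_perpSet hsymm _)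
      (subset_perpSet_perpSet_union_left hsymm _ _) h]
    exact mem_perpSet_perpSet_union_singleton hsymm _ e
  have hx : x ∉ A^⊥ := fun hx => hirrefl x (hx x hxA)
  exact ⟨x, hxA,
    hcover.perpSet_perpSet_union_singleton_eq hsymm (orthoclosed_perpSet hsymm A) he hx hxe⟩

theorem isSasakiMap_of_perpSet_perpSet_union_singleton_eq
    (hsymm : ∀ x y, perp x y → perp y x) {A : Set X} {φ : X → X} (hmem : ∀ e ∉ A^⊥, φ e ∈ A)
    (hfix : ∀ e ∈ A, φ e = e) (hjoin : ∀ e ∉ A^⊥, (A^⊥ ∪ {φ e})^⊥^⊥ = (A^⊥ ∪ {e})^⊥^⊥) :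
    IsSasakiMap perp A φ := by
  have adjoint : ∀ e ∉ A^⊥, ∀ f ∉ A^⊥, perp (φ e) f → perp e (φ f) := by
    intro e he f hf hef
    have hφf : φ f ∈ (A^⊥ ∪ {f})^⊥^⊥ :=
      hjoin f hf ▸ mem_perpSet_perpSet_union_singleton hsymm _ _
    have hφe : φ e ∈ (A^⊥ ∪ {f})^⊥ := by
      rintro b (hb | rfl)
      · exact hsymm _ _ (hb _ (hmem e he))
      · exact hef
    have hperp : A^⊥ ∪ {φ e} ⊆ {φ f}^⊥ := by
      rintro z (hz | rfl) _ rfl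
      · exact hz _ (hmem f hf)
      · exact hsymm _ _ (hφf _ hφe)
    have he' : e ∈ (A^⊥ ∪ {φ e})^⊥^⊥ :=
      (hjoin e he).symm ▸ mem_perpSet_perpSet_union_singleton hsymm _ _
    exact perpSet_perpSet_subset (orthoclosed_perpSet hsymm _) hperp he' _ rfl
  exact ⟨hmem, hfix, fun e he f hf =>
    ⟨adjoint e he f hf, fun h => hsymm _ _ (adjoint f hf e he (hsymm _ _ h))⟩⟩

theorem exists_isSasakiMap (hsymm : ∀ x y, perp x y → perp y x) {A : Set X}
    (h : ∀ e ∉ A^⊥, ∃ x ∈ A, (A^⊥ ∪ {x})^⊥^⊥ = (A^⊥ ∪ {e})^⊥^⊥) :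
    ∃ φ, IsSasakiMap perp A φ := by
  have point : ∀ e, ∃ x, (e ∉ A^⊥ → x ∈ A ∧ (A^⊥ ∪ {x})^⊥^⊥ = (A^⊥ ∪ {e})^⊥^⊥) ∧
      (e ∈ A → x = e) := by
    intro e
    by_cases heA : e ∈ A
    · exact ⟨e, fun _ => ⟨heA, rfl⟩, fun _ => rfl⟩
    by_cases he : e ∈ A^⊥
    · exact ⟨e, fun h => absurd he h, fun h => absurd h heA⟩
    obtain ⟨x, hx⟩ := h e he
    exact ⟨x, fun _ => hx, fun h => absurd h heA⟩
  choose φ hφ hfix using point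
  exact ⟨φ, isSasakiMap_of_perpSet_perpSet_union_singleton_eq hsymm (fun e he => (hφ e he).1)
    hfix fun e he => (hφ e he).2⟩

end

theorem dacey_covering_implies_sasaki_general {X : Type*} (perp : X → X → Prop)
    (hsymm : ∀ x y, perp x y → perp y x) (hirrefl : ∀ x, ¬ perp x x)
    (hDacey : ∀ A B : Set X, Orthoclosed perp A → Orthoclosed perp B → A ⊆ B →
      B = perpSet perp (perpSet perp (A ∪ (B ∩ perpSet perp A))))
    (hcover : ∀ A : Set X, Orthoclosed perp A → ∀ x ∉ A,
      A ⊂ perpSet perp (perpSet perp (A ∪ {x})) ∧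
      ∀ B : Set X, Orthoclosed perp B → A ⊂ B →
        B ⊆ perpSet perp (perpSet perp (A ∪ {x})) →
        B = perpSet perp (perpSet perp (A ∪ {x}))) :
    IsSasakiSpace perp := by
  intro A hA
  exact exists_isSasakiMap hsymm fun e he =>
    exists_mem_perpSet_perpSet_union_singleton_eq hsymm hirrefl hDacey hcover hA he

/-- a point-closed Dacey space whose lattice of orthoclosed
subsets has the covering property is a Sasaki space. -/
theorem dacey_covering_implies_sasaki {X : Type*} (perp : X → X → Prop)
    (hsymm : ∀ x y, perp x y → perp y x) (hirrefl : ∀ x, ¬ perp x x)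
    (hpoint : ∀ x : X, Orthoclosed perp {x})
    (hDacey : ∀ A B : Set X, Orthoclosed perp A → Orthoclosed perp B → A ⊆ B →
      B = perpSet perp (perpSet perp (A ∪ (B ∩ perpSet perp A))))
    (hcover : ∀ A : Set X, Orthoclosed perp A → ∀ x ∉ A,
      A ⊂ perpSet perp (perpSet perp (A ∪ {x})) ∧
      ∀ B : Set X, Orthoclosed perp B → A ⊂ B →
        B ⊆ perpSet perp (perpSet perp (A ∪ {x})) →
        B = perpSet perp (perpSet perp (A ∪ {x}))) :
    IsSasakiSpace perp :=
  dacey_covering_implies_sasaki_general perp hsymm hirrefl hDacey hcover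
end

section
/- Let (X,⊥) be a Sasaki space, and for each orthoclosed A fix a Sasaki map φ_A and define φ̄_A on C(X,⊥) by φ̄_A(B) = {φ_A(e) : e ∈ B, e ∉ A^⊥}^⊥⊥. Then for all orthoclosed B, C: φ̄_A(B) ⊥ C if and only if B ⊥ φ̄_A(C); consequently φ̄_A preserves arbitrary joins in C(X,⊥). -/
/-- The extension `φ̄_A` of a Sasaki map to the lattice of orthoclosed sets:
`φ̄_A(B) = {φ_A(e) : e ∈ B, e ∉ A^⊥}^⊥⊥`. -/
def sasakiBar {X : Type*} (perp : X → X → Prop) (A : Set X) (φ : X → X)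
    (B : Set X) : Set X :=
  perpSet perp (perpSet perp (φ '' (B \ perpSet perp A)))

/-!
Everything reduces to the set-level adjunction `φ(S \ A^⊥) ⊥ T ↔ S ⊥ φ(T \ A^⊥)`, which is the
Sasaki-map axiom `φ e ⊥ f ↔ e ⊥ φ f` once one notes that elements of `A^⊥` are orthogonal to the
whole range `φ(∁ A^⊥) ⊆ A`. Since `S ⊥ T` only depends on the closures `S^⊥⊥`, `T^⊥⊥`, this lifts to
`φ̄_A`. A self-adjoint map on orthoclosed sets preserves joins: both `φ̄_A(⋁ B_i)^⊥` and
`(⋃ φ̄_A(B_i))^⊥` consist of the `x` with `B_i ⊥ φ̄_A({x})` for all `i`.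
-/

section

variable {X : Type*} {perp : X → X → Prop}

def SetOrthogonal (perp : X → X → Prop) (S T : Set X) : Prop :=
  ∀ s ∈ S, ∀ t ∈ T, perp s t

theorem mem_perpSet_iff_setOrthogonal {x : X} {S : Set X} :
    x ∈ perpSet perp S ↔ SetOrthogonal perp {x} S := by
  simp [perpSet, SetOrthogonal]

theorem setOrthogonal_iUnion_left {ι : Sort*} {S : ι → Set X} {T : Set X} :
    SetOrthogonal perp (⋃ i, S i) T ↔ ∀ i, SetOrthogonal perp (S i) T := by
  simp only [SetOrthogonal, Set.mem_iUnion, forall_exists_index]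
  exact forall_comm

theorem setOrthogonal_comm [Std.Symm perp] {S T : Set X} :
    SetOrthogonal perp S T ↔ SetOrthogonal perp T S :=
  ⟨fun h t ht s hs => symm_of perp (h s hs t ht), fun h s hs t ht => symm_of perp (h t ht s hs)⟩

theorem setOrthogonal_perpSet_perpSet_left [Std.Symm perp] {S T : Set X} :
    SetOrthogonal perp (perpSet perp (perpSet perp S)) T ↔ SetOrthogonal perp S T :=
  ⟨fun h s hs t ht => h s (fun _ hy => symm_of perp (hy s hs)) t ht,
    fun h _ hs t ht => hs t fun a ha => symm_of perp (h a ha t ht)⟩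

theorem setOrthogonal_perpSet_perpSet_right [Std.Symm perp] {S T : Set X} :
    SetOrthogonal perp S (perpSet perp (perpSet perp T)) ↔ SetOrthogonal perp S T := by
  rw [setOrthogonal_comm, setOrthogonal_perpSet_perpSet_left, setOrthogonal_comm]

theorem orthoclosed_perpSet_s19 [Std.Symm perp] (S : Set X) :
    Orthoclosed perp (perpSet perp S) := by
  ext x
  rw [mem_perpSet_iff_setOrthogonal, mem_perpSet_iff_setOrthogonal,
    setOrthogonal_perpSet_perpSet_right]

theorem map_perpSet_perpSet_iUnion_of_selfAdjoint [Std.Symm perp]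
    {f : Set X → Set X} (hf : ∀ B C, SetOrthogonal perp (f B) C ↔ SetOrthogonal perp B (f C))
    (hclosed : ∀ B, Orthoclosed perp (f B)) {ι : Sort*} (B : ι → Set X) :
    f (perpSet perp (perpSet perp (⋃ i, B i))) = perpSet perp (perpSet perp (⋃ i, f (B i))) := by
  have mem_perpSet_f : ∀ {x : X} {S : Set X},
      x ∈ perpSet perp (f S) ↔ SetOrthogonal perp S (f {x}) := by
    intro x S
    rw [mem_perpSet_iff_setOrthogonal, setOrthogonal_comm, hf]
  have hperp : perpSet perp (f (perpSet perp (perpSet perp (⋃ i, B i)))) =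
      perpSet perp (⋃ i, f (B i)) := by
    ext x
    rw [mem_perpSet_f, setOrthogonal_perpSet_perpSet_left, setOrthogonal_iUnion_left,
      mem_perpSet_iff_setOrthogonal, setOrthogonal_comm, setOrthogonal_iUnion_left]
    refine forall_congr' fun i => ?_
    rw [← mem_perpSet_f, mem_perpSet_iff_setOrthogonal, setOrthogonal_comm]
  rw [← hclosed, hperp]

namespace IsSasakiMap

variable {A : Set X} {φ : X → X}

theorem setOrthogonal_image_iff [Std.Symm perp] (hφ : IsSasakiMap perp A φ)
    {S T : Set X} :
    SetOrthogonal perp (φ '' (S \ perpSet perp A)) T ↔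
      SetOrthogonal perp S (φ '' (T \ perpSet perp A)) := by
  obtain ⟨maps_to, -, adjoint⟩ := hφ
  constructor
  · rintro h e he _ ⟨f, ⟨hfT, hfA⟩, rfl⟩
    by_cases heA : e ∈ perpSet perp A
    · exact heA _ (maps_to f hfA)
    · exact (adjoint e heA f hfA).mp (h _ ⟨e, ⟨he, heA⟩, rfl⟩ f hfT)
  · rintro h _ ⟨e, ⟨heS, heA⟩, rfl⟩ f hf
    by_cases hfA : f ∈ perpSet perp A
    · exact symm_of perp (hfA _ (maps_to e heA))
    · exact (adjoint e heA f hfA).mpr (h e heS _ ⟨f, ⟨hf, hfA⟩, rfl⟩)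

theorem setOrthogonal_sasakiBar_iff [Std.Symm perp] (hφ : IsSasakiMap perp A φ)
    (B C : Set X) :
    SetOrthogonal perp (sasakiBar perp A φ B) C ↔ SetOrthogonal perp B (sasakiBar perp A φ C) := by
  rw [sasakiBar, sasakiBar, setOrthogonal_perpSet_perpSet_left,
    setOrthogonal_image_iff hφ, setOrthogonal_perpSet_perpSet_right]

end IsSasakiMap

end

theorem sasakiBar_selfAdjoint_and_joinPreserving_general {X : Type*}
    (perp : X → X → Prop)
    (hsymm : ∀ x y, perp x y → perp y x)
    (Φ : Set X → (X → X))
    (hΦ : ∀ A : Set X, Orthoclosed perp A → IsSasakiMap perp A (Φ A))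
    (A : Set X) (hA : Orthoclosed perp A) :
    (∀ B C : Set X, Orthoclosed perp B → Orthoclosed perp C →
      ((∀ b ∈ sasakiBar perp A (Φ A) B, ∀ c ∈ C, perp b c) ↔
       (∀ b ∈ B, ∀ c ∈ sasakiBar perp A (Φ A) C, perp b c))) ∧
    (∀ (I : Type) (B : I → Set X), (∀ i, Orthoclosed perp (B i)) →
      sasakiBar perp A (Φ A) (perpSet perp (perpSet perp (⋃ i, B i))) =
        perpSet perp (perpSet perp (⋃ i, sasakiBar perp A (Φ A) (B i)))) := by
  have : Std.Symm perp := ⟨hsymm⟩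
  have selfAdjoint := (hΦ A hA).setOrthogonal_sasakiBar_iff
  refine ⟨fun B C _ _ => selfAdjoint B C, fun I B _ => ?_⟩
  exact map_perpSet_perpSet_iUnion_of_selfAdjoint selfAdjoint
    (fun C => orthoclosed_perpSet_s19 _) B

/-- in a Sasaki space, with a fixed choice `Φ A` of Sasaki map to
each orthoclosed `A`, the extension `φ̄_A` is self-adjoint w.r.t. orthogonality
and consequently preserves arbitrary joins in `C(X,⊥)`. -/
theorem sasakiBar_selfAdjoint_and_joinPreserving {X : Type*}
    (perp : X → X → Prop)
    (hsymm : ∀ x y, perp x y → perp y x) (hirrefl : ∀ x, ¬ perp x x)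
    (hSasaki : IsSasakiSpace perp)
    (Φ : Set X → (X → X))
    (hΦ : ∀ A : Set X, Orthoclosed perp A → IsSasakiMap perp A (Φ A))
    (A : Set X) (hA : Orthoclosed perp A) :
    (∀ B C : Set X, Orthoclosed perp B → Orthoclosed perp C →
      ((∀ b ∈ sasakiBar perp A (Φ A) B, ∀ c ∈ C, perp b c) ↔
       (∀ b ∈ B, ∀ c ∈ sasakiBar perp A (Φ A) C, perp b c))) ∧
    (∀ (I : Type) (B : I → Set X), (∀ i, Orthoclosed perp (B i)) →
      sasakiBar perp A (Φ A) (perpSet perp (perpSet perp (⋃ i, B i))) =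
        perpSet perp (perpSet perp (⋃ i, sasakiBar perp A (Φ A) (B i)))) :=
  sasakiBar_selfAdjoint_and_joinPreserving_general perp hsymm Φ hΦ A hA
end
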